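/- arXiv:math/0406097 — 12 statements merged into one kernel-verified Lean document; each statement's English description precedes it below -/
import Mathlib

section
/- Let (R, m) be a zero-dimensional Gorenstein local ring, let I ⊆ m be an ideal, and let r be a nonnegative integer with I^r ≠ 0 and I^{r+1} = 0. Then (0 : I^{r-i}) = I^{i+1} holds for every integer i with 0 ≤ i ≤ r-1 if and only if (0 : I^{r-i}) = I^{i+1} holds for every integer i with 0 ≤ i ≤ ⌊(r-1)/2⌋. -/
/-!
Over an Artinian local ring `R` that is injective over itself, `R` contains a copy of the residue
field, and by injectivity every map from a simple submodule to `R` extends; since every nonzero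
cyclic module has a simple submodule, `R` is an injective cogenerator. Hence `J ↦ (0 : J)` is an
inclusion-reversing involution on ideals, so `(0 : I^(r-i)) = I^(i+1)` is equivalent to
`(0 : I^(i+1)) = I^(r-i)`, which is the same condition for the index `r - 1 - i`. The conditions
for `i ≤ ⌊(r-1)/2⌋` therefore imply those for the remaining indices.
-/

section SelfInjective

variable {R : Type*} [CommRing R] [IsArtinianRing R] [IsLocalRing R]

theorem IsLocalRing.exists_injective_linearMap_of_isSimpleModule (S : Type*) [AddCommGroup S]
    [Module R S] [IsSimpleModule R S] : ∃ f : S →ₗ[R] R, Function.Injective f := by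
  obtain ⟨T, hT⟩ := IsAtomic.exists_atom (Submodule R R)
  rw [← isSimpleModule_iff_isAtom, isSimpleModule_iff_quot_maximal] at hT
  obtain ⟨m₁, hm₁, ⟨e₁⟩⟩ := isSimpleModule_iff_quot_maximal.mp ‹IsSimpleModule R S›
  obtain ⟨m₂, hm₂, ⟨e₂⟩⟩ := hT
  rw [IsLocalRing.eq_maximalIdeal hm₁] at e₁
  rw [IsLocalRing.eq_maximalIdeal hm₂] at e₂
  exact ⟨T.subtype ∘ₗ (e₁.trans e₂.symm).toLinearMap,
    T.injective_subtype.comp (e₁.trans e₂.symm).injective⟩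

variable [Module.Injective R R]

theorem IsLocalRing.exists_linearMap_apply_ne_zero {M : Type*} [AddCommGroup M] [Module R M]
    {x : M} (hx : x ≠ 0) : ∃ f : M →ₗ[R] R, f x ≠ 0 := by
  set N := Submodule.span R {x}
  have : Nontrivial N := Submodule.nontrivial_iff_ne_bot.mpr (by simpa [N] using hx)
  obtain ⟨S, hS⟩ := IsAtomic.exists_atom (Submodule R N)
  have := isSimpleModule_iff_isAtom.mpr hS
  obtain ⟨g, hg⟩ := exists_injective_linearMap_of_isSimpleModule (R := R) S
  obtain ⟨f, hf⟩ := Module.Injective.extension_property R R S M (N.subtype ∘ₗ S.subtype)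
    (N.injective_subtype.comp S.injective_subtype) g
  refine ⟨f, fun hfx => ?_⟩
  have hfN : ∀ n : N, f n = 0 := fun ⟨n, hn⟩ => by
    obtain ⟨c, rfl⟩ := Submodule.mem_span_singleton.mp hn
    simp [hfx]
  have := IsSimpleModule.nontrivial R S
  obtain ⟨s, hs⟩ := exists_ne (0 : S)
  exact hs (hg (by simpa [hfN] using (LinearMap.congr_fun hf s).symm))

theorem IsLocalRing.colon_bot_colon_bot (J : Ideal R) :
    (⊥ : Ideal R).colon ((⊥ : Ideal R).colon (J : Set R) : Set R) = J := by
  refine le_antisymm (fun x hx => ?_) fun x hx => Submodule.mem_colon.mpr fun y hy => ?_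
  · by_contra hxJ
    obtain ⟨f, hf⟩ := exists_linearMap_apply_ne_zero
      (R := R) (x := Ideal.Quotient.mk J x)
      (Ideal.Quotient.eq_zero_iff_mem.not.mpr hxJ)
    have hf_mk (a : R) : f (Ideal.Quotient.mk J a) = a * f (Ideal.Quotient.mk J 1) := by
      rw [← smul_eq_mul, ← map_smul, Algebra.smul_def, Ideal.Quotient.algebraMap_eq, ← map_mul, mul_one]
    have hu : f (Ideal.Quotient.mk J 1) ∈ (⊥ : Ideal R).colon (J : Set R) :=
      Submodule.mem_colon.mpr fun a ha => by
        rw [smul_eq_mul, mul_comm, ← hf_mk, Ideal.Quotient.eq_zero_iff_mem.mpr ha, map_zero]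
        exact zero_mem _
    apply hf
    simpa [hf_mk, mul_comm] using Submodule.mem_colon.mp hx _ hu
  · simpa [mul_comm] using Submodule.mem_colon.mp hy x hx

theorem IsLocalRing.colon_bot_eq_comm {A B : Ideal R} :
    (⊥ : Ideal R).colon (A : Set R) = B ↔ (⊥ : Ideal R).colon (B : Set R) = A := by
  constructor <;> rintro rfl <;> exact colon_bot_colon_bot _

end SelfInjective

theorem colon_bot_eq_pow_iff_half_range_general
    {R : Type*} [CommRing R] [IsArtinianRing R] [IsLocalRing R] [Module.Injective R R]
    (I : Ideal R) (r : ℕ) :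
    (∀ i : ℕ, i + 1 ≤ r → Submodule.colon (⊥ : Ideal R) ((I ^ (r - i) : Ideal R) : Set R) = I ^ (i + 1)) ↔
      (∀ i : ℕ, 2 * i + 1 ≤ r → Submodule.colon (⊥ : Ideal R) ((I ^ (r - i) : Ideal R) : Set R) = I ^ (i + 1)) := by
  refine ⟨fun h i hi => h i (by omega), fun h i hi => ?_⟩
  rcases le_or_gt (2 * i + 1) r with hlow | hhigh
  · exact h i hlow
  · have hdual := h (r - 1 - i) (by omega)
    rw [show r - (r - 1 - i) = i + 1 by omega, show r - 1 - i + 1 = r - i by omega] at hdual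
    exact IsLocalRing.colon_bot_eq_comm.mp hdual

/-- **Theorem 3.1 (3) ⟺ (4)**: Let `(R, m)` be a zero-dimensional Gorenstein local ring
(i.e. an Artinian local ring that is injective as a module over itself), let `I ⊆ m` be an
ideal, and let `r ≥ 0` with `I ^ r ≠ 0` and `I ^ (r + 1) = 0`.  Then `(0 : I^(r-i)) = I^(i+1)`
for all `0 ≤ i ≤ r - 1` iff `(0 : I^(r-i)) = I^(i+1)` for all `0 ≤ i ≤ ⌊(r-1)/2⌋`. -/
theorem colon_bot_eq_pow_iff_half_range
    {R : Type*} [CommRing R] [IsArtinianRing R] [IsLocalRing R] [Module.Injective R R]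
    (I : Ideal R) (hIm : I ≤ IsLocalRing.maximalIdeal R)
    (r : ℕ) (hr : I ^ r ≠ ⊥) (hr1 : I ^ (r + 1) = ⊥) :
    (∀ i : ℕ, i + 1 ≤ r → Submodule.colon (⊥ : Ideal R) ((I ^ (r - i) : Ideal R) : Set R) = I ^ (i + 1)) ↔
      (∀ i : ℕ, 2 * i + 1 ≤ r → Submodule.colon (⊥ : Ideal R) ((I ^ (r - i) : Ideal R) : Set R) = I ^ (i + 1)) :=
  colon_bot_eq_pow_iff_half_range_general I r
end

section
/- Let (R, m) be a zero-dimensional Gorenstein local ring, let I ⊆ m be an ideal, and let r be a nonnegative integer with I^r ≠ 0 and I^{r+1} = 0. Then (0 : I^{r-i}) = I^{i+1} holds for every integer i with 0 ≤ i ≤ r-1 if and only if both (I^r : I^{r-i}) = I^i for every integer i with 1 ≤ i ≤ r-1 and (0 : I) = I^r. -/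
/-!
The equivalence is formal. Colon ideals satisfy `((A : B) : C) = (A : BC)`, so once
`(0 : I) = I^r` we get `(I^r : I^k) = ((0 : I) : I^k) = (0 : I^(k+1))`: the two families of
conditions are the same family up to a shift of the index, and the extra condition
`(0 : I) = I^r` is the `i = r - 1` member of the first family.
-/

namespace Ideal

variable {R : Type*} [CommSemiring R]

theorem le_colon_iff_mul_le {A I J : Ideal R} : A ≤ I.colon J ↔ A * J ≤ I := by
  rw [Submodule.mul_le]
  simp only [SetLike.le_def, Submodule.mem_colon, smul_eq_mul, SetLike.mem_coe]

theorem colon_colon (I J K : Ideal R) : (I.colon J).colon K = I.colon (J * K) := by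
  ext x
  rw [← span_singleton_le_iff_mem, ← span_singleton_le_iff_mem, le_colon_iff_mul_le,
    le_colon_iff_mul_le, le_colon_iff_mul_le, mul_assoc, mul_comm K]

theorem colon_pow_eq_bot_colon_pow_succ {I : Ideal R} {r : ℕ} (h : (⊥ : Ideal R).colon I = I ^ r)
    (k : ℕ) : (I ^ r).colon (I ^ k : Ideal R) = (⊥ : Ideal R).colon (I ^ (k + 1) : Ideal R) := by
  rw [← h, colon_colon, pow_succ']

end Ideal

theorem colon_bot_eq_pow_iff_colon_top_pow_general
    {R : Type*} [CommRing R]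
    (I : Ideal R)
    (r : ℕ) (hr1 : I ^ (r + 1) = ⊥) :
    (∀ i : ℕ, i + 1 ≤ r → Submodule.colon (⊥ : Ideal R) ((I ^ (r - i) : Ideal R) : Set R) = I ^ (i + 1)) ↔
      ((∀ i : ℕ, 1 ≤ i → i + 1 ≤ r → Submodule.colon (I ^ r) ((I ^ (r - i) : Ideal R) : Set R) = I ^ i) ∧
        Submodule.colon (⊥ : Ideal R) I = I ^ r) := by
  constructor
  · intro h
    have h0 : (⊥ : Ideal R).colon I = I ^ r := by
      rcases Nat.eq_zero_or_pos r with rfl | hr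
      · obtain rfl : I = ⊥ := by simpa using hr1
        simp
      · simpa [Nat.sub_sub_self hr, Nat.sub_add_cancel hr] using h (r - 1) (by omega)
    refine ⟨fun i hi hir ↦ ?_, h0⟩
    rw [Ideal.colon_pow_eq_bot_colon_pow_succ h0]
    simpa [show r - (i - 1) = r - i + 1 by omega, Nat.sub_add_cancel hi] using h (i - 1) (by omega)
  · rintro ⟨h, h0⟩ i hir
    obtain rfl | hi := eq_or_lt_of_le hir
    · simpa using h0
    · rw [show r - i = r - (i + 1) + 1 by omega, ← Ideal.colon_pow_eq_bot_colon_pow_succ h0]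
      exact h (i + 1) (by omega) (by omega)

/-- **Theorem 3.1 (3) ⟺ (6)**: Let `(R, m)` be a zero-dimensional Gorenstein local ring
(i.e. an Artinian local ring that is injective as a module over itself), let `I ⊆ m` be an
ideal, and let `r ≥ 0` with `I ^ r ≠ 0` and `I ^ (r + 1) = 0`.  Then `(0 : I^(r-i)) = I^(i+1)`
for all `0 ≤ i ≤ r - 1` iff both `(I^r : I^(r-i)) = I^i` for all `1 ≤ i ≤ r - 1` and
`(0 : I) = I^r`. -/
theorem colon_bot_eq_pow_iff_colon_top_pow
    {R : Type*} [CommRing R] [IsArtinianRing R] [IsLocalRing R] [Module.Injective R R]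
    (I : Ideal R) (hIm : I ≤ IsLocalRing.maximalIdeal R)
    (r : ℕ) (hr : I ^ r ≠ ⊥) (hr1 : I ^ (r + 1) = ⊥) :
    (∀ i : ℕ, i + 1 ≤ r → Submodule.colon (⊥ : Ideal R) ((I ^ (r - i) : Ideal R) : Set R) = I ^ (i + 1)) ↔
      ((∀ i : ℕ, 1 ≤ i → i + 1 ≤ r → Submodule.colon (I ^ r) ((I ^ (r - i) : Ideal R) : Set R) = I ^ i) ∧
        Submodule.colon (⊥ : Ideal R) I = I ^ r) :=
  colon_bot_eq_pow_iff_colon_top_pow_general I r hr1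
end

section
/- Let (R, m) be a zero-dimensional Gorenstein local ring, let I ⊆ m be an ideal, and let r be a nonnegative integer with I^r ≠ 0 and I^{r+1} = 0. Then the following are equivalent: (a) I^i ∩ (I^{i+1} : m) ∩ (I^{i+2} : I) = I^{i+1} for every integer i with 0 ≤ i ≤ r-1 (this says that the graded socle of the associated graded ring of I vanishes in all degrees below r); (b) (0 : I^{r-i}) = I^{i+1} for every integer i with 0 ≤ i ≤ r-1. -/
/-!
Write `K j` for the annihilator `(0 : I ^ j)`. Over a zero-dimensional Gorenstein ring every ideal
is the annihilator of its annihilator, so taking annihilators turns intersections into sums and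
`(A : B)` into `(0 : A) * B`. Applied to condition (a) in degree `i` this gives
`K (i + 1) = K i + (0 : I ^ (i + 1)) m + I K (i + 2)`, hence `K (i + 1) = K i + I K (i + 2)` by
Nakayama. Since `K 0 = 0`, induction on `i` gives `K (i + 1) = I K (i + 2)` for `i < r`, and since
`K (r + 1) = R`, descending induction gives `K (r - i) = I ^ (i + 1)`. Conversely, if
`x I ⊆ I ^ (i + 2)` then `x I ^ (r - i) ⊆ I ^ (r + 1) = 0`, so (b) forces the intersection in (a)
down to `I ^ (i + 1)`.
-/

open IsLocalRing Submodule

section CommSemiring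

variable {R : Type*} [CommSemiring R]

theorem Ideal.le_annihilator_iff_mul_eq_bot {A B : Ideal R} : A ≤ B.annihilator ↔ A * B = ⊥ := by
  rw [le_annihilator_iff, smul_eq_mul]

theorem Ideal.annihilator_top : (⊤ : Ideal R).annihilator = ⊥ :=
  eq_bot_iff.mpr fun x hx => by simpa using mem_annihilator.mp hx 1 trivial

theorem Ideal.annihilator_mul (C B : Ideal R) :
    (C * B).annihilator = C.annihilator.colon (B : Set R) := by
  ext x
  calc x ∈ (C * B).annihilator ↔ Ideal.span {x} * B * C = ⊥ := by
        rw [← Ideal.span_singleton_le_iff_mem, le_annihilator_iff_mul_eq_bot, mul_comm C,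
          mul_assoc]
    _ ↔ x ∈ C.annihilator.colon (B : Set R) := by
        rw [← le_annihilator_iff_mul_eq_bot, Ideal.span_singleton_mul_le_iff, mem_colon]
        rfl

theorem Ideal.mul_annihilator_pow_succ_le (I : Ideal R) (n : ℕ) :
    I * (I ^ (n + 1)).annihilator ≤ (I ^ n).annihilator := by
  rw [le_annihilator_iff_mul_eq_bot, mul_comm I, mul_assoc, ← pow_succ',
    ← le_annihilator_iff_mul_eq_bot]

theorem Ideal.pow_succ_le_inf_colon (I J : Ideal R) (i : ℕ) :
    I ^ (i + 1) ≤ I ^ i ⊓ (I ^ (i + 1)).colon (J : Set R) ⊓ (I ^ (i + 2)).colon (I : Set R) := by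
  refine le_inf (le_inf (Ideal.pow_le_pow_right i.le_succ) ?_) ?_
  · exact fun x hx => mem_colon.mpr fun y _ => Ideal.mul_mem_right y _ hx
  · exact fun x hx => mem_colon.mpr fun y hy => by
      rw [pow_succ _ (i + 1)]
      exact Ideal.mul_mem_mul hx hy

theorem Ideal.colon_pow_le_annihilator {I : Ideal R} {a b : ℕ} (hI : I ^ (a + b + 1) = ⊥) :
    (I ^ (a + 1)).colon (I : Set R) ≤ (I ^ (b + 1)).annihilator := by
  intro x hx
  have hxI : Ideal.span {x} * I ≤ I ^ (a + 1) :=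
    Ideal.span_singleton_mul_le_iff.mpr fun y hy => mem_colon.mp hx y hy
  rw [← Ideal.span_singleton_le_iff_mem, le_annihilator_iff_mul_eq_bot, ← le_bot_iff]
  calc Ideal.span {x} * I ^ (b + 1) = Ideal.span {x} * I * I ^ b := by rw [pow_succ', mul_assoc]
    _ ≤ I ^ (a + 1) * I ^ b := Ideal.mul_mono_left hxI
    _ = ⊥ := by rw [← pow_add, add_right_comm, hI]

theorem Ideal.eq_mul_of_eq_sup_mul {I : Ideal R} {K : ℕ → Ideal R} {r : ℕ} (hK : Monotone K)
    (h0 : K 0 = ⊥) (h : ∀ i, i + 1 ≤ r → K (i + 1) = K i ⊔ I * K (i + 2)) :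
    ∀ i, i + 1 ≤ r → K (i + 1) = I * K (i + 2)
  | 0, hi => by rw [h 0 hi, h0, bot_sup_eq]
  | i + 1, hi => by
    rw [h (i + 1) hi, eq_mul_of_eq_sup_mul hK h0 h i (by omega), sup_eq_right]
    exact Ideal.mul_mono_right (hK (by omega))

theorem Ideal.eq_pow_of_eq_mul {I : Ideal R} {K : ℕ → Ideal R} {r : ℕ} (htop : K (r + 1) = ⊤)
    (h : ∀ i, i + 1 ≤ r → K (i + 1) = I * K (i + 2)) :
    ∀ i, i + 1 ≤ r → K (r - i) = I ^ (i + 1)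
  | 0, hi => by
    have hr := h (r - 1) (by omega)
    rwa [show r - 1 + 1 = r by omega, show r - 1 + 2 = r + 1 by omega, htop, Ideal.mul_top,
      ← pow_one I] at hr
  | i + 1, hi => by
    have hr := h (r - i - 2) (by omega)
    rwa [show r - i - 2 + 1 = r - (i + 1) by omega, show r - i - 2 + 2 = r - i by omega,
      eq_pow_of_eq_mul htop h i (by omega), ← pow_succ'] at hr

end CommSemiring

section CommRing

variable {R : Type*} [CommRing R]

universe v in
theorem Module.Injective.exists_comp_eq_of_ker_le {Q : Type v} {P M : Type*} [AddCommGroup Q]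
    [Module R Q] [Module.Injective R Q] [Small.{v} R] [AddCommGroup P] [Module R P]
    [AddCommGroup M] [Module R M] (f : P →ₗ[R] M) (g : P →ₗ[R] Q)
    (h : LinearMap.ker f ≤ LinearMap.ker g) : ∃ e : M →ₗ[R] Q, e ∘ₗ f = g := by
  obtain ⟨e, he⟩ := Module.Injective.extension_property R Q _ M ((LinearMap.ker f).liftQ f le_rfl)
    (LinearMap.ker_eq_bot.mp (ker_liftQ_eq_bot _ _ _ le_rfl)) ((LinearMap.ker f).liftQ g h)
  refine ⟨e, ?_⟩
  rw [← liftQ_mkQ _ f le_rfl, ← LinearMap.comp_assoc, he, liftQ_mkQ]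

/-- Self-injectivity extends `s x ↦ s z` from `R x ⊆ R / A` to all of `R / A`; the image of `1`
is the required `c`. -/
theorem exists_mem_annihilator_mul_eq [Module.Injective R R] {A : Ideal R} {x z : R}
    (hz : ∀ s, s * x ∈ A → s * z = 0) : ∃ c ∈ A.annihilator, c * x = z := by
  obtain ⟨e, he⟩ := Module.Injective.exists_comp_eq_of_ker_le
    (LinearMap.toSpanSingleton R (R ⧸ A) (Ideal.Quotient.mk A x))
    (LinearMap.toSpanSingleton R R z) fun s hs => by
      rw [LinearMap.mem_ker, LinearMap.toSpanSingleton_apply, Algebra.smul_def,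
        Ideal.Quotient.algebraMap_eq, ← map_mul, Ideal.Quotient.eq_zero_iff_mem] at hs
      exact hz s hs
  have he_mk : ∀ a, e (Ideal.Quotient.mk A a) = a * e (Ideal.Quotient.mk A 1) := fun a => by
    rw [← smul_eq_mul, ← map_smul, Algebra.smul_def, Ideal.Quotient.algebraMap_eq, ← map_mul,
      mul_one]
  refine ⟨e (Ideal.Quotient.mk A 1), mem_annihilator.mpr fun a ha => ?_, ?_⟩
  · rw [smul_eq_mul, mul_comm, ← he_mk, Ideal.Quotient.eq_zero_iff_mem.mpr ha, map_zero]
  · simpa [mul_comm, he_mk] using LinearMap.congr_fun he 1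

/-- The maximal ideal is an associated prime of `R`. -/
theorem IsLocalRing.exists_ne_zero_forall_mem_maximalIdeal_mul_eq_zero [IsArtinianRing R]
    [IsLocalRing R] : ∃ z : R, z ≠ 0 ∧ ∀ y ∈ maximalIdeal R, y * z = 0 := by
  obtain ⟨P, hP⟩ := associatedPrimes.nonempty R R
  obtain ⟨hPrime, z, rfl⟩ := isAssociatedPrime_iff.mp hP
  have hmax : (⊥ : Ideal R).colon {z} = maximalIdeal R := eq_maximalIdeal inferInstance
  refine ⟨z, fun hz => hPrime.ne_top ?_, fun y hy => ?_⟩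
  · rw [hz, colon_singleton_zero]
  · rw [← hmax] at hy
    simpa using mem_colon_singleton.mp hy

section Gorenstein

variable [IsArtinianRing R] [IsLocalRing R] [Module.Injective R R]

theorem Ideal.annihilator_annihilator (A : Ideal R) : A.annihilator.annihilator = A := by
  refine le_antisymm (fun x hx => ?_) fun a ha => mem_annihilator.mpr fun c hc => by
    rw [smul_eq_mul, mul_comm]
    exact mem_annihilator.mp hc a ha
  by_contra hxA
  have hcolon : A.colon {x} ≤ maximalIdeal R := le_maximalIdeal fun h => hxA <| by
    simpa using mem_colon_singleton.mp (h ▸ mem_top : (1 : R) ∈ A.colon {x})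
  obtain ⟨z, hz0, hz⟩ := exists_ne_zero_forall_mem_maximalIdeal_mul_eq_zero (R := R)
  obtain ⟨c, hc, rfl⟩ := exists_mem_annihilator_mul_eq (A := A) (x := x) (z := z) fun s hs =>
    hz s (hcolon (mem_colon_singleton.mpr hs))
  exact hz0 (by simpa [mul_comm] using mem_annihilator.mp hx c hc)

theorem Ideal.annihilator_inf (A B : Ideal R) :
    (A ⊓ B).annihilator = A.annihilator ⊔ B.annihilator := by
  rw [← annihilator_annihilator (_ ⊔ _), annihilator_sup, annihilator_annihilator,
    annihilator_annihilator]

theorem Ideal.annihilator_colon (A B : Ideal R) :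
    (A.colon (B : Set R)).annihilator = A.annihilator * B := by
  rw [← annihilator_annihilator (_ * _), annihilator_mul, annihilator_annihilator]

theorem Ideal.annihilator_pow_succ_eq_sup_of_inf_colon_eq {I : Ideal R} {i : ℕ}
    (h : I ^ i ⊓ (I ^ (i + 1)).colon (maximalIdeal R : Set R) ⊓ (I ^ (i + 2)).colon (I : Set R) =
      I ^ (i + 1)) :
    (I ^ (i + 1)).annihilator = (I ^ i).annihilator ⊔ I * (I ^ (i + 2)).annihilator := by
  have hdual := congrArg annihilator h
  rw [annihilator_inf, annihilator_inf, annihilator_colon, annihilator_colon] at hdual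
  refine le_antisymm ?_ (sup_le (annihilator_mono (Ideal.pow_le_pow_right i.le_succ))
    (mul_annihilator_pow_succ_le I (i + 1)))
  refine le_of_le_smul_of_le_jacobson_bot (IsNoetherian.noetherian _)
    (jacobson_eq_maximalIdeal ⊥ bot_ne_top).ge ?_
  rw [smul_eq_mul, mul_comm (maximalIdeal R), mul_comm I, sup_right_comm]
  exact hdual.ge

end Gorenstein

end CommRing

theorem socle_vanishes_iff_colon_bot_eq_pow_general
    {R : Type*} [CommRing R] [IsArtinianRing R] [IsLocalRing R] [Module.Injective R R]
    (I : Ideal R)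
    (r : ℕ) (hr1 : I ^ (r + 1) = ⊥) :
    (∀ i : ℕ, i + 1 ≤ r →
        I ^ i ⊓ Submodule.colon (I ^ (i + 1)) (IsLocalRing.maximalIdeal R) ⊓
          Submodule.colon (I ^ (i + 2)) I = I ^ (i + 1)) ↔
      (∀ i : ℕ, i + 1 ≤ r → Submodule.colon (⊥ : Ideal R) ((I ^ (r - i) : Ideal R) : Set R) = I ^ (i + 1)) := by
  simp only [bot_colon]
  constructor
  · intro ha
    let K : ℕ → Ideal R := fun j => (I ^ j).annihilator
    have hmono : Monotone K := fun a b hab => annihilator_mono (Ideal.pow_le_pow_right hab)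
    have h0 : K 0 = ⊥ := by simp [K, Ideal.annihilator_top]
    have htop : K (r + 1) = ⊤ := by simp only [K, hr1]; exact annihilator_bot
    have hrec : ∀ i, i + 1 ≤ r → K (i + 1) = K i ⊔ I * K (i + 2) := fun i hi =>
      Ideal.annihilator_pow_succ_eq_sup_of_inf_colon_eq (ha i hi)
    exact Ideal.eq_pow_of_eq_mul htop (Ideal.eq_mul_of_eq_sup_mul hmono h0 hrec)
  · intro hb i hi
    have hcolon := Ideal.colon_pow_le_annihilator (I := I) (a := i + 1) (b := r - i - 1)
      (by rwa [show i + 1 + (r - i - 1) + 1 = r + 1 by omega])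
    rw [show r - i - 1 + 1 = r - i by omega, hb i hi] at hcolon
    exact le_antisymm (inf_le_right.trans hcolon) (Ideal.pow_succ_le_inf_colon I _ i)

/-- **Theorem 3.1 (2) ⟺ (3)**: Let `(R, m)` be a zero-dimensional Gorenstein local ring
(i.e. an Artinian local ring that is injective as a module over itself), let `I ⊆ m` be an
ideal, and let `r ≥ 0` with `I ^ r ≠ 0` and `I ^ (r + 1) = 0`.  Then the graded socle of the
associated graded ring of `I` vanishes in all degrees `i < r`, i.e.
`I^i ∩ (I^(i+1) : m) ∩ (I^(i+2) : I) = I^(i+1)` for `0 ≤ i ≤ r - 1`, iff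
`(0 : I^(r-i)) = I^(i+1)` for `0 ≤ i ≤ r - 1`. -/
theorem socle_vanishes_iff_colon_bot_eq_pow
    {R : Type*} [CommRing R] [IsArtinianRing R] [IsLocalRing R] [Module.Injective R R]
    (I : Ideal R) (hIm : I ≤ IsLocalRing.maximalIdeal R)
    (r : ℕ) (hr : I ^ r ≠ ⊥) (hr1 : I ^ (r + 1) = ⊥) :
    (∀ i : ℕ, i + 1 ≤ r →
        I ^ i ⊓ Submodule.colon (I ^ (i + 1)) (IsLocalRing.maximalIdeal R) ⊓
          Submodule.colon (I ^ (i + 2)) I = I ^ (i + 1)) ↔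
      (∀ i : ℕ, i + 1 ≤ r → Submodule.colon (⊥ : Ideal R) ((I ^ (r - i) : Ideal R) : Set R) = I ^ (i + 1)) :=
  socle_vanishes_iff_colon_bot_eq_pow_general I r hr1
end

section
/- Let (R, m) be a zero-dimensional Gorenstein local ring, let I ⊆ m be an ideal, and let r be a nonnegative integer with I^r ≠ 0 and I^{r+1} = 0. If (0 : I^{r-i}) = I^{i+1} for every integer i with 0 ≤ i ≤ r-1 (the condition characterizing Gorensteinness of the associated graded ring of I), then I^{i+1} : I^i = I for every integer i with 0 ≤ i ≤ r; in particular each I^i/I^{i+1} is a faithful module over R/I. -/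
/-!
If `x I^i ⊆ I^(i+1)`, multiplying by `I^(r-i)` gives `x I^r ⊆ I^(r+1) = 0`, so `x` lies in
`(0 : I^r)`, which is `I` by the Gorenstein condition at `i = 0`. The inclusion `I ⊆ I^(i+1) : I^i`
always holds, and for `i = 0` the claim is just `I : R = I`.
-/

open scoped Pointwise

namespace Ideal

variable {R : Type*} [CommRing R]

theorem colon_le_colon_mul (J K L : Ideal R) :
    J.colon (K : Set R) ≤ (J * L).colon ((K * L : Ideal R) : Set R) := by
  intro x hx
  rw [Submodule.mem_colon_iff_le] at hx ⊢
  rw [← smul_mul_assoc]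
  exact mul_mono_left hx

theorem le_pow_succ_colon_pow (I : Ideal R) (i : ℕ) :
    I ≤ (I ^ (i + 1)).colon ((I ^ i : Ideal R) : Set R) := by
  intro x hx
  rw [Submodule.mem_colon]
  intro y hy
  rw [smul_eq_mul, pow_succ']
  exact mul_mem_mul hx hy

theorem pow_succ_colon_pow_le_bot_colon {I : Ideal R} {r i : ℕ} (hi : i ≤ r)
    (hI : I ^ (r + 1) = ⊥) :
    (I ^ (i + 1)).colon ((I ^ i : Ideal R) : Set R) ≤
      (⊥ : Ideal R).colon ((I ^ r : Ideal R) : Set R) := by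
  have h := colon_le_colon_mul (I ^ (i + 1)) (I ^ i) (I ^ (r - i))
  rwa [← pow_add, ← pow_add, Nat.add_right_comm, Nat.add_sub_cancel' hi, hI] at h

end Ideal

theorem colon_pow_succ_pow_eq_self_of_gorenstein_assoc_graded_general
    {R : Type*} [CommRing R]
    (I : Ideal R)
    (r : ℕ) (hr1 : I ^ (r + 1) = ⊥)
    (hG : ∀ i : ℕ, i + 1 ≤ r → Submodule.colon (⊥ : Ideal R) ((I ^ (r - i) : Ideal R) : Set R) = I ^ (i + 1)) :
    ∀ i : ℕ, i ≤ r → Submodule.colon (I ^ (i + 1)) ((I ^ i : Ideal R) : Set R) = I := by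
  rintro (_ | i) hi
  · simp only [zero_add, pow_one, pow_zero, Ideal.one_eq_top, Submodule.top_coe, Submodule.colon_univ]
  · refine le_antisymm ?_ (I.le_pow_succ_colon_pow _)
    calc (I ^ (i + 2)).colon ((I ^ (i + 1) : Ideal R) : Set R)
        ≤ (⊥ : Ideal R).colon ((I ^ r : Ideal R) : Set R) :=
          Ideal.pow_succ_colon_pow_le_bot_colon hi hr1
      _ = I := by simpa using hG 0 (by omega)

/-- **Corollary 3.3**: Let `(R, m)` be a zero-dimensional Gorenstein local ring
(i.e. an Artinian local ring that is injective as a module over itself), let `I ⊆ m` be an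
ideal, and let `r ≥ 0` with `I ^ r ≠ 0` and `I ^ (r + 1) = 0`.  If `(0 : I^(r-i)) = I^(i+1)`
for all `0 ≤ i ≤ r - 1` (the condition characterizing Gorensteinness of the associated graded
ring of `I`), then `(I^(i+1) : I^i) = I` for all `0 ≤ i ≤ r`; in particular each
`I^i/I^(i+1)` is a faithful `R/I`-module. -/
theorem colon_pow_succ_pow_eq_self_of_gorenstein_assoc_graded
    {R : Type*} [CommRing R] [IsArtinianRing R] [IsLocalRing R] [Module.Injective R R]
    (I : Ideal R) (hIm : I ≤ IsLocalRing.maximalIdeal R)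
    (r : ℕ) (hr : I ^ r ≠ ⊥) (hr1 : I ^ (r + 1) = ⊥)
    (hG : ∀ i : ℕ, i + 1 ≤ r → Submodule.colon (⊥ : Ideal R) ((I ^ (r - i) : Ideal R) : Set R) = I ^ (i + 1)) :
    ∀ i : ℕ, i ≤ r → Submodule.colon (I ^ (i + 1)) ((I ^ i : Ideal R) : Set R) = I :=
  colon_pow_succ_pow_eq_self_of_gorenstein_assoc_graded_general I r hr1 hG
end

section
/- Let R be a commutative ring, let x ∈ R be a non-zerodivisor, let J = xR, and let I be an ideal with J ⊆ I. Let r ≥ 1 be an integer with I^{r+1} = JI^r. If J : I^{r-i} = J + I^{i+1} for every integer i with 0 ≤ i ≤ r-1, then J ∩ I^i = JI^{i-1} for every integer i with 1 ≤ i ≤ r (the Valabrega–Valla condition, which in the one-dimensional local Cohen–Macaulay setting implies that the associated graded ring of I is Cohen–Macaulay). -/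
/-!
Cancelling the non-zerodivisor `x` turns `x b ∈ I^i` into `b I^(r-i+1) ⊆ I^r`, using
`I^(r+1) = x I^r`. So it suffices that `I^r : I^(r-k) ⊆ I^k` for `k ≤ r`, which goes by
induction on `k`: if `b I^(r-k-1) ⊆ I^r`, then `b I^(r-k) ⊆ x I^r ⊆ J`, so the colon hypothesis
writes `b = x c + d` with `d ∈ I^(k+1)`; then `x c I^(r-k) ⊆ x I^r`, cancelling gives
`c ∈ I^r : I^(r-k) ⊆ I^k`, and `b ∈ x I^k + I^(k+1) ⊆ I^(k+1)`.
-/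

open Ideal

namespace Ideal

variable {R : Type*} [CommRing R]

theorem mem_colon_iff_span_singleton_mul_le {N A : Ideal R} {b : R} :
    b ∈ N.colon (A : Set R) ↔ span {b} * A ≤ N := by
  rw [Submodule.mem_colon, span_singleton_mul_le_iff]
  rfl

theorem le_mul_colon (A B : Ideal R) : A ≤ (A * B).colon (B : Set R) := fun _ ha =>
  mem_colon_iff_span_singleton_mul_le.mpr
    (mul_mono_left ((span_singleton_le_iff_mem A).mpr ha))

theorem colon_le_mul_colon_mul (N A B : Ideal R) :
    N.colon (A : Set R) ≤ (N * B).colon ((A * B : Ideal R) : Set R) := fun b hb => by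
  rw [mem_colon_iff_span_singleton_mul_le, ← mul_assoc] at *
  exact mul_mono_left hb

theorem mul_mem_span_singleton_mul_iff {x c : R} (hx : x ∈ nonZeroDivisors R) {N : Ideal R} :
    x * c ∈ span {x} * N ↔ c ∈ N := by
  refine ⟨fun h => ?_, fun h => mul_mem_mul (mem_span_singleton_self x) h⟩
  obtain ⟨z, hz, hxz⟩ := mem_span_singleton_mul.mp h
  rwa [← (mul_cancel_left_mem_nonZeroDivisors hx).mp hxz]

theorem mul_mem_span_singleton_mul_colon_iff {x c : R} (hx : x ∈ nonZeroDivisors R)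
    {N : Ideal R} {S : Set R} : x * c ∈ (span {x} * N).colon S ↔ c ∈ N.colon S := by
  simp only [Submodule.mem_colon, smul_eq_mul, mul_assoc, mul_mem_span_singleton_mul_iff hx]

variable {x : R} {I : Ideal R} {r : ℕ}

theorem pow_colon_pow_sub_le (hx : x ∈ nonZeroDivisors R) (hxI : x ∈ I)
    (hred : I ^ (r + 1) = span {x} * I ^ r)
    (hcol : ∀ k : ℕ, k + 1 ≤ r →
      (span {x}).colon ((I ^ (r - k) : Ideal R) : Set R) = span {x} ⊔ I ^ (k + 1)) :
    ∀ k ≤ r, (I ^ r).colon ((I ^ (r - k) : Ideal R) : Set R) ≤ I ^ k := by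
  intro k
  induction k with
  | zero => exact fun _ => by simp
  | succ k ih =>
    intro hk b hb
    have hb' : b ∈ (span {x} * I ^ r).colon ((I ^ (r - k) : Ideal R) : Set R) := by
      rw [← hred, show r - k = r - (k + 1) + 1 by omega, pow_succ, pow_succ]
      exact colon_le_mul_colon_mul _ _ _ hb
    have hbJ : b ∈ (span {x}).colon ((I ^ (r - k) : Ideal R) : Set R) :=
      Submodule.colon_mono Ideal.mul_le_left le_rfl hb'
    rw [hcol k hk] at hbJ
    obtain ⟨u, hu, d, hd, rfl⟩ := Submodule.mem_sup.mp hbJ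
    obtain ⟨c, rfl⟩ := mem_span_singleton.mp hu
    have hd' : d ∈ (span {x} * I ^ r).colon ((I ^ (r - k) : Ideal R) : Set R) := by
      rw [← hred, show r + 1 = k + 1 + (r - k) by omega, pow_add]
      exact le_mul_colon _ _ hd
    have hc : c ∈ I ^ k := ih (by omega) <|
      (mul_mem_span_singleton_mul_colon_iff hx).mp (by simpa using sub_mem hb' hd')
    rw [pow_succ']
    exact add_mem (mul_mem_mul hxI hc) (pow_succ' I k ▸ hd)

end Ideal

theorem inf_pow_eq_mul_pow_pred_of_colon_J_general
    {R : Type*} [CommRing R] (x : R) (hx : x ∈ nonZeroDivisors R)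
    (J : Ideal R) (hJ : J = Ideal.span {x}) (I : Ideal R) (hJI : J ≤ I)
    (r : ℕ) (hred : I ^ (r + 1) = J * I ^ r)
    (hcol : ∀ i : ℕ, i + 1 ≤ r → Submodule.colon J ((I ^ (r - i) : Ideal R) : Set R) = J ⊔ I ^ (i + 1)) :
    ∀ i : ℕ, 1 ≤ i → i ≤ r → J ⊓ I ^ i = J * I ^ (i - 1) := by
  subst hJ
  have hxI : x ∈ I := hJI (mem_span_singleton_self x)
  intro i hi hir
  have hpow : I ^ i * I ^ (r - (i - 1)) = span {x} * I ^ r := by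
    rw [← pow_add, ← hred, show i + (r - (i - 1)) = r + 1 by omega]
  refine le_antisymm ?_ (le_inf Ideal.mul_le_left ?_)
  · rintro a ⟨haJ, haI⟩
    obtain ⟨b, rfl⟩ := mem_span_singleton.mp haJ
    have hb : x * b ∈ (span {x} * I ^ r).colon ((I ^ (r - (i - 1)) : Ideal R) : Set R) :=
      hpow ▸ le_mul_colon _ _ haI
    exact mul_mem_mul (mem_span_singleton_self x) <| pow_colon_pow_sub_le hx hxI hred hcol
      (i - 1) (by omega) ((mul_mem_span_singleton_mul_colon_iff hx).mp hb)
  · calc span {x} * I ^ (i - 1) ≤ I * I ^ (i - 1) := mul_mono_left hJI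
      _ = I ^ i := by rw [← pow_succ', Nat.sub_add_cancel hi]

/-- **Lemma 3.6, Valabrega–Valla condition in dimension one**: Let `R` be a commutative
ring, `x` a non-zerodivisor, `J = xR ⊆ I`, and `r ≥ 1` with `I^(r+1) = J I^r`.  If
`(J : I^(r-i)) = J + I^(i+1)` for all `0 ≤ i ≤ r - 1`, then `J ∩ I^i = J I^(i-1)` for all
`1 ≤ i ≤ r`. -/
theorem inf_pow_eq_mul_pow_pred_of_colon_J
    {R : Type*} [CommRing R] (x : R) (hx : x ∈ nonZeroDivisors R)
    (J : Ideal R) (hJ : J = Ideal.span {x}) (I : Ideal R) (hJI : J ≤ I)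
    (r : ℕ) (hr : 1 ≤ r) (hred : I ^ (r + 1) = J * I ^ r)
    (hcol : ∀ i : ℕ, i + 1 ≤ r → Submodule.colon J ((I ^ (r - i) : Ideal R) : Set R) = J ⊔ I ^ (i + 1)) :
    ∀ i : ℕ, 1 ≤ i → i ≤ r → J ⊓ I ^ i = J * I ^ (i - 1) :=
  inf_pow_eq_mul_pow_pred_of_colon_J_general x hx J hJ I hJI r hred hcol
end

section
/- Let R be a commutative ring and let J ⊆ I be ideals of R such that the quotient ring R/J is an Artinian local ring that is injective as a module over itself (i.e., R/J is a zero-dimensional Gorenstein local ring). Let r ≥ 1 be an integer. Then J : I^{r-i} = J + I^{i+1} holds for every integer i with 0 ≤ i ≤ r-1 if and only if it holds for every integer i with 0 ≤ i ≤ ⌊(r-1)/2⌋. -/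
/-!
Modulo `J`, the colon ideal `J : a` is the annihilator of the image of `a` in the zero-dimensional
Gorenstein ring `R ⧸ J`, where taking annihilators is an involution on ideals: if `x ∉ b`, the map
`Rx + b → R` that kills `b` and sends `x` to a socle element extends, by self-injectivity, to
multiplication by some `y ∈ ann b` with `x * y ≠ 0`. So `J : A = J + B` implies `J : B = J + A`,
and for `i` in the upper half of `[0, r - 1]` the equation at `i` is obtained from the one at the
mirror index `r - 1 - i`.
-/

open Submodule

universe u

theorem IsLocalRing.exists_ne_zero_torsionOf_eq_maximalIdeal (S : Type*) [CommRing S]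
    [IsArtinianRing S] [IsLocalRing S] :
    ∃ z : S, z ≠ 0 ∧ Ideal.torsionOf S S z = maximalIdeal S := by
  obtain ⟨P, hP⟩ := associatedPrimes.nonempty S S
  obtain ⟨hPrime, z, rfl⟩ := (isAssociatedPrime_iff (R := S)).1 hP
  have := hPrime
  refine ⟨z, ?_, ?_⟩
  · rintro rfl
    exact hPrime.ne_top colon_singleton_zero
  · rw [← IsLocalRing.eq_maximalIdeal (IsArtinianRing.isMaximal_of_isPrime (colon ⊥ {z}))]
    ext a
    simp [Ideal.mem_torsionOf_iff, mem_colon_singleton]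

theorem Module.Injective.exists_linearMap_apply_eq {S M : Type u} [CommRing S] [AddCommGroup M]
    [Module S M] [Module.Injective S S] {m : M} {z : S}
    (h : Ideal.torsionOf S M m ≤ Ideal.torsionOf S S z) : ∃ g : M →ₗ[S] S, g m = z := by
  let g₀ : (S ∙ m) →ₗ[S] S :=
    (liftQ _ (LinearMap.toSpanSingleton S S z) h).comp
      (Ideal.quotTorsionOfEquivSpanSingleton S M m).symm.toLinearMap
  obtain ⟨g, hg⟩ := Module.Injective.out _ (injective_subtype (S ∙ m)) g₀
  have hm : (Ideal.quotTorsionOfEquivSpanSingleton S M m).symm ⟨m, mem_span_singleton_self m⟩ =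
      Submodule.Quotient.mk 1 := by
    rw [LinearEquiv.symm_apply_eq, Ideal.quotTorsionOfEquivSpanSingleton_apply_mk, one_smul]
  refine ⟨g, (hg ⟨m, mem_span_singleton_self m⟩).trans ?_⟩
  rw [LinearMap.comp_apply, LinearEquiv.coe_coe, hm]
  exact one_smul S z

theorem Ideal.colon_bot_colon_bot {S : Type u} [CommRing S] [IsArtinianRing S] [IsLocalRing S]
    [Module.Injective S S] (b : Ideal S) :
    (⊥ : Ideal S).colon ((⊥ : Ideal S).colon (b : Set S) : Set S) = b := by
  refine le_antisymm (fun x hx => ?_) fun x hx => mem_colon.2 fun y hy => ?_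
  · by_contra hxb
    obtain ⟨z, hz0, hz⟩ := IsLocalRing.exists_ne_zero_torsionOf_eq_maximalIdeal S
    have hne : Ideal.torsionOf S (S ⧸ b) (Submodule.Quotient.mk x) ≠ ⊤ := by
      rwa [Ne, Ideal.torsionOf_eq_top_iff, Submodule.Quotient.mk_eq_zero]
    obtain ⟨g, hg⟩ :=
      Module.Injective.exists_linearMap_apply_eq (hz ▸ IsLocalRing.le_maximalIdeal hne)
    have hmk (s : S) : g (Submodule.Quotient.mk s) = s * g (Submodule.Quotient.mk 1) := by
      rw [← smul_eq_mul, ← map_smul, ← Submodule.Quotient.mk_smul, smul_eq_mul, mul_one]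
    have hann : g (Submodule.Quotient.mk 1) ∈ (⊥ : Ideal S).colon (b : Set S) :=
      mem_colon.2 fun t ht => by
        rw [mem_bot, smul_eq_mul, mul_comm, ← hmk, (Quotient.mk_eq_zero b).2 ht, map_zero]
    have := mem_colon.1 hx _ hann
    rw [mem_bot, smul_eq_mul, ← hmk, hg] at this
    exact hz0 this
  · have := mem_colon.1 hy x hx
    rwa [smul_eq_mul, mul_comm] at this

theorem Submodule.colon_sup_left {R M : Type*} [CommRing R] [AddCommGroup M] [Module R M]
    (N P : Submodule R M) : N.colon ((N ⊔ P : Submodule R M) : Set M) = N.colon (P : Set M) :=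
  calc N.colon ((N ⊔ P : Submodule R M) : Set M)
      = N.colon (span R ((N : Set M) ∪ P) : Set M) := by rw [span_union, span_eq, span_eq]
    _ = N.colon ((N : Set M) ∪ P) := colon_span
    _ = N.colon (P : Set M) := by
      rw [colon_union, (colon_eq_top_iff_subset _).2 subset_rfl, top_inf_eq]

theorem Ideal.colon_eq_comap_colon_bot_map {R : Type*} [CommRing R] (J A : Ideal R) :
    J.colon (A : Set R) = ((⊥ : Ideal (R ⧸ J)).colon (A.map (Quotient.mk J) : Set (R ⧸ J))).comap
      (Quotient.mk J) := by
  ext x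
  simp only [mem_comap, mem_colon, SetLike.mem_coe,
    mem_map_iff_of_surjective _ Quotient.mk_surjective, forall_exists_index, and_imp,
    forall_apply_eq_imp_iff₂, smul_eq_mul, mem_bot, ← map_mul,
    Quotient.eq_zero_iff_mem]

theorem Ideal.colon_colon_of_le {R : Type u} [CommRing R] {J A : Ideal R} [IsArtinianRing (R ⧸ J)]
    [IsLocalRing (R ⧸ J)] [Module.Injective (R ⧸ J) (R ⧸ J)] (hJA : J ≤ A) :
    J.colon (J.colon (A : Set R) : Set R) = A := by
  rw [colon_eq_comap_colon_bot_map J (J.colon A), colon_eq_comap_colon_bot_map J A,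
    map_comap_of_surjective _ Quotient.mk_surjective, colon_bot_colon_bot, comap_map_mk hJA]

theorem Ideal.colon_eq_sup_of_colon_eq_sup {R : Type u} [CommRing R] {J A B : Ideal R}
    [IsArtinianRing (R ⧸ J)] [IsLocalRing (R ⧸ J)] [Module.Injective (R ⧸ J) (R ⧸ J)]
    (h : J.colon (A : Set R) = J ⊔ B) : J.colon (B : Set R) = J ⊔ A := by
  rw [← Submodule.colon_sup_left, ← h, ← Submodule.colon_sup_left J A,
    colon_colon_of_le le_sup_left]

theorem colon_J_eq_sup_iff_half_range_general
    {R : Type*} [CommRing R] (J I : Ideal R)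
    [IsArtinianRing (R ⧸ J)] [IsLocalRing (R ⧸ J)] [Module.Injective (R ⧸ J) (R ⧸ J)]
    (r : ℕ) :
    (∀ i : ℕ, i + 1 ≤ r → Submodule.colon J ((I ^ (r - i) : Ideal R) : Set R) = J ⊔ I ^ (i + 1)) ↔
      (∀ i : ℕ, 2 * i + 1 ≤ r → Submodule.colon J ((I ^ (r - i) : Ideal R) : Set R) = J ⊔ I ^ (i + 1)) := by
  refine ⟨fun h i hi => h i (by omega), fun h i hi => ?_⟩
  rcases le_or_gt (2 * i + 1) r with hi' | hi'
  · exact h i hi'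
  have hmirror := h (r - 1 - i) (by omega)
  rw [show r - (r - 1 - i) = i + 1 by omega, show r - 1 - i + 1 = r - i by omega] at hmirror
  exact Ideal.colon_eq_sup_of_colon_eq_sup hmirror

/-- **Theorem 3.8 (2) ⟺ (3)**: Let `R` be a commutative ring and `J ⊆ I` ideals such that
`R/J` is an Artinian local ring that is injective as a module over itself (a zero-dimensional
Gorenstein local ring).  Let `r ≥ 1`.  Then `(J : I^(r-i)) = J + I^(i+1)` for all
`0 ≤ i ≤ r - 1` iff the same holds for all `0 ≤ i ≤ ⌊(r-1)/2⌋`. -/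
theorem colon_J_eq_sup_iff_half_range
    {R : Type*} [CommRing R] (J I : Ideal R) (hJI : J ≤ I)
    [IsArtinianRing (R ⧸ J)] [IsLocalRing (R ⧸ J)] [Module.Injective (R ⧸ J) (R ⧸ J)]
    (r : ℕ) (hr : 1 ≤ r) :
    (∀ i : ℕ, i + 1 ≤ r → Submodule.colon J ((I ^ (r - i) : Ideal R) : Set R) = J ⊔ I ^ (i + 1)) ↔
      (∀ i : ℕ, 2 * i + 1 ≤ r → Submodule.colon J ((I ^ (r - i) : Ideal R) : Set R) = J ⊔ I ^ (i + 1)) :=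
  colon_J_eq_sup_iff_half_range_general J I r
end

section
/- Let R be a commutative ring and let I, J be ideals of R with J I^r = I^{r+1} for some integer r ≥ 0. Then I^n (J^i : I^r) ⊆ J^{n+i} : I^r for all integers n, i ≥ 0. -/
theorem pow_mul_pow_eq_of_mul_pow_eq {M : Type*} [Monoid M] {a b : M} {r : ℕ}
    (h : b * a ^ r = a ^ (r + 1)) (n : ℕ) : b ^ n * a ^ r = a ^ (n + r) := by
  induction n with
  | zero => simp
  | succ n ih =>
    calc b ^ (n + 1) * a ^ r = b ^ n * (b * a ^ r) := by rw [pow_succ, mul_assoc]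
      _ = a ^ (n + r + 1) := by rw [h, pow_succ a r, ← mul_assoc, ih, pow_succ]
      _ = a ^ (n + 1 + r) := by rw [Nat.add_right_comm]

theorem Ideal.le_colon_iff_mul_le_s9 {R : Type*} [CommSemiring R] {A B K : Ideal R} :
    K ≤ A.colon (B : Set R) ↔ K * B ≤ A := by
  simp only [SetLike.le_def, Submodule.mem_colon, SetLike.mem_coe, smul_eq_mul, ← Ideal.mul_le]

/-- **Corollary 4.21, first assertion**: Let `R` be a commutative ring and `I, J` ideals with
`J I^r = I^(r+1)` for some `r ≥ 0`.  Then `I^n (J^i : I^r) ⊆ J^(n+i) : I^r` for all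
`n, i ≥ 0`. -/
theorem pow_mul_colon_le_colon
    {R : Type*} [CommRing R] (I J : Ideal R) (r : ℕ) (hred : J * I ^ r = I ^ (r + 1)) :
    ∀ n i : ℕ,
      I ^ n * Submodule.colon (J ^ i) ((I ^ r : Ideal R) : Set R) ≤
        Submodule.colon (J ^ (n + i)) ((I ^ r : Ideal R) : Set R) := by
  intro n i
  set C := (J ^ i).colon ((I ^ r : Ideal R) : Set R)
  have hC : C * I ^ r ≤ J ^ i := Ideal.le_colon_iff_mul_le_s9.mp le_rfl
  rw [Ideal.le_colon_iff_mul_le_s9]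
  calc I ^ n * C * I ^ r = C * I ^ (n + r) := by ring
    _ = J ^ n * (C * I ^ r) := by rw [← pow_mul_pow_eq_of_mul_pow_eq hred]; ring
    _ ≤ J ^ n * J ^ i := Ideal.mul_mono_right hC
    _ = J ^ (n + i) := (pow_add J n i).symm
end

section
/- Let R be a Noetherian ring and let J ⊆ I be ideals of R such that I contains a non-zerodivisor and J I^r = I^{r+1} for some integer r ≥ 0. Then there exists an integer i_0 such that J^n (J^i : I^r) = J^{n+i} : I^r for every n ≥ 0 and every i ≥ i_0. -/
/-!
Choose generators `g₁, …, g_m` of `L = I ^ r` and consider `φ : R → R^m`, `z ↦ (z g₁, …, z g_m)`.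
Then `K : L = φ⁻¹(K R^m)` for every ideal `K`, and `φ` is injective because `L` contains a
non-zerodivisor. The Artin–Rees lemma for the submodule `φ(R)` of `R^m` gives
`J^(n+i) R^m ∩ φ(R) = J^n (J^i R^m ∩ φ(R))` for large `i`, and pulling back along `φ` turns this
into `J^(n+i) : L = J^n (J^i : L)`.
-/

open Submodule

section

variable {R : Type*} [CommRing R]

theorem Submodule.mem_ideal_smul_top_pi {ι : Type*} [Finite ι] {K : Ideal R} {v : ι → R} :
    v ∈ K • (⊤ : Submodule R (ι → R)) ↔ ∀ i, v i ∈ K := by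
  classical
  cases nonempty_fintype ι
  refine ⟨fun hv i => ?_, fun hv => ?_⟩
  · exact smul_induction_on hv (fun a ha w _ => K.mul_mem_right (w i) ha) fun _ _ => K.add_mem
  · rw [pi_eq_sum_univ v]
    exact sum_mem fun i _ => smul_mem_smul (hv i) mem_top

theorem Ideal.colon_span_range_eq_comap_smul_top {ι : Type*} [Finite ι] (K : Ideal R)
    (g : ι → R) :
    K.colon (Ideal.span (Set.range g)) =
      Submodule.comap (LinearMap.toSpanSingleton R (ι → R) g) (K • ⊤) := by
  ext z
  simp only [Ideal.colon_span, mem_colon, Set.forall_mem_range, Submodule.mem_comap,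
    LinearMap.toSpanSingleton_apply, mem_ideal_smul_top_pi, Pi.smul_apply]

theorem Submodule.exists_pow_smul_comap_smul_top_eq {M N : Type*} [AddCommGroup M] [Module R M]
    [AddCommGroup N] [Module R N] [IsNoetherianRing R] [Module.Finite R M] (J : Ideal R)
    {φ : N →ₗ[R] M} (hφ : Function.Injective φ) :
    ∃ k, ∀ n i, k ≤ i → J ^ n • comap φ (J ^ i • ⊤) = comap φ (J ^ (n + i) • ⊤) := by
  obtain ⟨k, hk⟩ := Ideal.exists_pow_inf_eq_pow_smul J (LinearMap.range φ)
  refine ⟨k, fun n i hi => map_injective_of_injective hφ ?_⟩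
  calc map φ (J ^ n • comap φ (J ^ i • ⊤))
      = J ^ n • (J ^ i • ⊤ ⊓ LinearMap.range φ) := by
        rw [map_smul'', map_comap_eq, inf_comm]
    _ = J ^ (n + i) • ⊤ ⊓ LinearMap.range φ := by
        rw [hk i hi, hk (n + i) (by omega), smul_smul, ← pow_add, Nat.add_sub_assoc hi]
    _ = map φ (comap φ (J ^ (n + i) • ⊤)) := by
        rw [map_comap_eq, inf_comm]

theorem Ideal.exists_pow_mul_colon_eq_colon_of_annihilator_eq_bot [IsNoetherianRing R]
    (J L : Ideal R) (hL : L.annihilator = ⊥) :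
    ∃ k, ∀ n i, k ≤ i → J ^ n * (J ^ i).colon (L : Set R) = (J ^ (n + i)).colon (L : Set R) := by
  obtain ⟨m, g, hg⟩ := fg_iff_exists_fin_generating_family.mp (IsNoetherian.noetherian L)
  have colon_eq (K : Ideal R) : K.colon (L : Set R) =
      Submodule.comap (LinearMap.toSpanSingleton R (Fin m → R) g) (K • ⊤) := by
    rw [← colon_span_range_eq_comap_smul_top, ← hg]
  have hinj : Function.Injective (LinearMap.toSpanSingleton R (Fin m → R) g) := by
    rw [← LinearMap.ker_eq_bot, LinearMap.ker, ← Submodule.bot_smul (A := R) ⊤, ← colon_eq,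
      bot_colon, hL]
  simpa only [colon_eq, ← Ideal.smul_eq_mul] using exists_pow_smul_comap_smul_top_eq J hinj

theorem Ideal.annihilator_eq_bot_of_mem_nonZeroDivisors {L : Ideal R} {x : R} (hxL : x ∈ L)
    (hx : x ∈ nonZeroDivisors R) : L.annihilator = ⊥ :=
  eq_bot_iff.mpr fun z hz => mem_nonZeroDivisors_iff_right.mp hx z (mem_annihilator.mp hz x hxL)

end

theorem exists_pow_mul_colon_eq_colon_general
    {R : Type*} [CommRing R] [IsNoetherianRing R] (J I : Ideal R)
    (hnzd : ∃ x ∈ I, x ∈ nonZeroDivisors R)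
    (r : ℕ) :
    ∃ i₀ : ℕ, ∀ n : ℕ, ∀ i : ℕ, i₀ ≤ i →
      J ^ n * Submodule.colon (J ^ i) ((I ^ r : Ideal R) : Set R) = Submodule.colon (J ^ (n + i)) ((I ^ r : Ideal R) : Set R) := by
  obtain ⟨x, hxI, hx⟩ := hnzd
  exact Ideal.exists_pow_mul_colon_eq_colon_of_annihilator_eq_bot J (I ^ r)
    (Ideal.annihilator_eq_bot_of_mem_nonZeroDivisors (Ideal.pow_mem_pow hxI r) (pow_mem hx r))

/-- **Corollary 4.21, second assertion**: Let `R` be a Noetherian ring and `J ⊆ I` ideals such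
that `I` contains a non-zerodivisor and `J I^r = I^(r+1)` for some `r ≥ 0`.  Then there is an
integer `i₀` with `J^n (J^i : I^r) = J^(n+i) : I^r` for every `n ≥ 0` and every `i ≥ i₀`. -/
theorem exists_pow_mul_colon_eq_colon
    {R : Type*} [CommRing R] [IsNoetherianRing R] (J I : Ideal R) (hJI : J ≤ I)
    (hnzd : ∃ x ∈ I, x ∈ nonZeroDivisors R)
    (r : ℕ) (hred : J * I ^ r = I ^ (r + 1)) :
    ∃ i₀ : ℕ, ∀ n : ℕ, ∀ i : ℕ, i₀ ≤ i →
      J ^ n * Submodule.colon (J ^ i) ((I ^ r : Ideal R) : Set R) = Submodule.colon (J ^ (n + i)) ((I ^ r : Ideal R) : Set R) :=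
  exists_pow_mul_colon_eq_colon_general J I hnzd r
end

section
/- Let R be a commutative ring, let x ∈ R be a non-zerodivisor, let J = xR, and let I be an ideal with J ⊆ I. Let r ≥ 1 be an integer with I^{r+1} = JI^r and I^r ≠ JI^{r-1} (so r is the reduction number of I with respect to J). If J^r : I^r = I^{r-u} for some integer u with 0 ≤ u ≤ r, then u = 0; in particular J^r : I^r = I^r. -/
/-!
Iterating `I ^ (r + 1) = J * I ^ r` gives `I ^ (r + k) = J ^ k * I ^ r`, and multiplication by
a power of `J = (x)` can be cancelled because `x` is a non-zerodivisor. Hence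
`I ^ (r - u) * I ^ r ≤ J ^ r` forces `I ^ r ≤ J ^ u`. Writing `I ^ r = J ^ u * K`, the same
cancellation gives `K * I ^ r ≤ J ^ r`, so `K ≤ J ^ r : I ^ r = I ^ (r - u)` and
`I ^ r ≤ J ^ u * I ^ (r - u) ≤ J * I ^ (r - 1)` when `u ≥ 1`, contradicting the minimality of `r`.
-/

open scoped nonZeroDivisors

namespace Ideal

variable {R : Type*} [CommRing R]

theorem le_colon_iff_mul_le_s11 {A B C : Ideal R} : A ≤ C.colon (B : Set R) ↔ A * B ≤ C := by
  rw [mul_le]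
  simp only [SetLike.le_def, Submodule.mem_colon, SetLike.mem_coe, smul_eq_mul]

theorem span_singleton_mul_le_span_singleton_mul_iff {x : R} (hx : x ∈ R⁰) {A B : Ideal R} :
    span {x} * A ≤ span {x} * B ↔ A ≤ B := by
  simp_rw [span_singleton_mul_le_span_singleton_mul, mul_cancel_left_mem_nonZeroDivisors hx,
    exists_eq_right', SetLike.le_def]

theorem span_singleton_pow_mul_le_span_singleton_pow_mul_iff {x : R} (hx : x ∈ R⁰) (k : ℕ)
    {A B : Ideal R} : span {x} ^ k * A ≤ span {x} ^ k * B ↔ A ≤ B := by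
  rw [span_singleton_pow, span_singleton_mul_le_span_singleton_mul_iff (pow_mem hx k)]

theorem eq_span_singleton_mul_colon_of_le {A : Ideal R} {y : R} (h : A ≤ span {y}) :
    A = span {y} * A.colon {y} := by
  refine (eq_span_singleton_mul _ _).mpr ⟨fun a ha => ?_, fun b hb => ?_⟩
  · obtain ⟨b, rfl⟩ := mem_span_singleton'.mp (h ha)
    exact ⟨b, Submodule.mem_colon_singleton.mpr ha, mul_comm y b⟩
  · simpa [mul_comm] using Submodule.mem_colon_singleton.mp hb

theorem pow_add_eq_pow_mul_of_pow_succ_eq {I J : Ideal R} {r : ℕ} (hred : I ^ (r + 1) = J * I ^ r)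
    (k : ℕ) : I ^ (r + k) = J ^ k * I ^ r := by
  induction k with
  | zero => simp
  | succ k ih => rw [← add_assoc, pow_succ, ih, mul_assoc, ← pow_succ, hred, pow_succ, mul_assoc]

theorem pow_mul_pow_sub_le_mul_pow_sub_one {I J : Ideal R} (hJI : J ≤ I) {u r : ℕ} (hu : 1 ≤ u)
    (hur : u ≤ r) : J ^ u * I ^ (r - u) ≤ J * I ^ (r - 1) := by
  obtain ⟨v, rfl⟩ := Nat.exists_eq_add_of_le' hu
  calc J ^ (v + 1) * I ^ (r - (v + 1)) = J * (J ^ v * I ^ (r - (v + 1))) := by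
        rw [pow_succ', mul_assoc]
    _ ≤ J * (I ^ v * I ^ (r - (v + 1))) := mul_mono_right (mul_mono_left (pow_right_mono hJI v))
    _ = J * I ^ (r - 1) := by rw [← pow_add]; congr 2; omega

theorem mul_pow_sub_one_le_pow {I J : Ideal R} (hJI : J ≤ I) {r : ℕ} (hr : 1 ≤ r) :
    J * I ^ (r - 1) ≤ I ^ r :=
  calc J * I ^ (r - 1) ≤ I * I ^ (r - 1) := mul_mono_left hJI
    _ = I ^ r := by rw [← pow_succ', Nat.sub_add_cancel hr]

variable {x : R} (hx : x ∈ R⁰) {I : Ideal R} {r : ℕ} (hred : I ^ (r + 1) = span {x} * I ^ r)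
include hx hred

theorem pow_le_span_singleton_pow_of_mul_le {s u : ℕ} (h : I ^ s * I ^ r ≤ span {x} ^ (s + u)) :
    I ^ r ≤ span {x} ^ u := by
  rw [← span_singleton_pow_mul_le_span_singleton_pow_mul_iff hx s]
  calc span {x} ^ s * I ^ r = I ^ s * I ^ r := by
        rw [← pow_add_eq_pow_mul_of_pow_succ_eq hred, pow_add, mul_comm]
    _ ≤ span {x} ^ s * span {x} ^ u := h.trans_eq (pow_add _ s u)

theorem pow_le_span_singleton_pow_mul_colon {u : ℕ} (h : I ^ r ≤ span {x} ^ u) :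
    I ^ r ≤ span {x} ^ u * (span {x} ^ r).colon ((I ^ r : Ideal R) : Set R) := by
  set K := (I ^ r).colon {x ^ u}
  have hK : I ^ r = span {x} ^ u * K := by
    rw [span_singleton_pow] at h ⊢
    exact eq_span_singleton_mul_colon_of_le h
  have hKI : K * I ^ r ≤ span {x} ^ r := by
    rw [← span_singleton_pow_mul_le_span_singleton_pow_mul_iff hx u]
    calc span {x} ^ u * (K * I ^ r) = span {x} ^ r * I ^ r := by
          rw [← mul_assoc, ← hK, ← pow_add, pow_add_eq_pow_mul_of_pow_succ_eq hred]
      _ ≤ span {x} ^ r * span {x} ^ u := mul_mono_right h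
      _ = span {x} ^ u * span {x} ^ r := mul_comm _ _
  calc I ^ r = span {x} ^ u * K := hK
    _ ≤ _ := mul_mono_right (le_colon_iff_mul_le_s11.mpr hKI)

end Ideal

open Ideal in
theorem eq_zero_of_colon_pow_eq_pow_sub_general
    {R : Type*} [CommRing R] (x : R) (hx : x ∈ nonZeroDivisors R)
    (J : Ideal R) (hJ : J = Ideal.span {x}) (I : Ideal R) (hJI : J ≤ I)
    (r : ℕ) (hred : I ^ (r + 1) = J * I ^ r) (hmin : I ^ r ≠ J * I ^ (r - 1))
    (u : ℕ) (hu : u ≤ r) (hcol : Submodule.colon (J ^ r) ((I ^ r : Ideal R) : Set R) = I ^ (r - u)) :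
    u = 0 ∧ Submodule.colon (J ^ r) ((I ^ r : Ideal R) : Set R) = I ^ r := by
  suffices hu0 : u = 0 from ⟨hu0, by simpa [hu0] using hcol⟩
  subst hJ
  by_contra hu0
  have hu1 : 1 ≤ u := Nat.one_le_iff_ne_zero.mpr hu0
  have hIJ : I ^ r ≤ span {x} ^ u := by
    refine pow_le_span_singleton_pow_of_mul_le hx hred (s := r - u) ?_
    rw [← le_colon_iff_mul_le_s11, Nat.sub_add_cancel hu, hcol]
  refine hmin (le_antisymm ?_ (mul_pow_sub_one_le_pow hJI (hu1.trans hu)))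
  calc I ^ r ≤ span {x} ^ u * I ^ (r - u) := hcol ▸ pow_le_span_singleton_pow_mul_colon hx hred hIJ
    _ ≤ span {x} * I ^ (r - 1) := pow_mul_pow_sub_le_mul_pow_sub_one hJI hu1 hu

/-- **Corollary 4.61, first assertion**: Let `R` be a commutative ring, `x` a non-zerodivisor,
`J = xR ⊆ I`, and `r ≥ 1` with `I^(r+1) = J I^r` and `I^r ≠ J I^(r-1)` (so `r` is the
reduction number of `I` with respect to `J`).  If `(J^r : I^r) = I^(r-u)` for some
`0 ≤ u ≤ r`, then `u = 0`; in particular `(J^r : I^r) = I^r`. -/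
theorem eq_zero_of_colon_pow_eq_pow_sub
    {R : Type*} [CommRing R] (x : R) (hx : x ∈ nonZeroDivisors R)
    (J : Ideal R) (hJ : J = Ideal.span {x}) (I : Ideal R) (hJI : J ≤ I)
    (r : ℕ) (hr : 1 ≤ r) (hred : I ^ (r + 1) = J * I ^ r) (hmin : I ^ r ≠ J * I ^ (r - 1))
    (u : ℕ) (hu : u ≤ r) (hcol : Submodule.colon (J ^ r) ((I ^ r : Ideal R) : Set R) = I ^ (r - u)) :
    u = 0 ∧ Submodule.colon (J ^ r) ((I ^ r : Ideal R) : Set R) = I ^ r :=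
  eq_zero_of_colon_pow_eq_pow_sub_general x hx J hJ I hJI r hred hmin u hu hcol
end

section
/- Let R be a commutative ring, let I be an ideal, and let x, y ∈ R be non-zerodivisors with xR ⊆ I and yR ⊆ I. Suppose r ≥ 0 is least with x I^r = I^{r+1} and s ≥ 0 is least with y I^s = I^{s+1}. Then r = s, and moreover x^r R : I^r = y^r R : I^r (so both the reduction number and the ideal J^r : I^r are independent of the choice of principal reduction J of I). -/
/-!
If `x I^r = I^(r+1)` then multiplication by `x` maps `I^n` onto `I^(n+1)` for every `n ≥ r`, so
`x^k I^r = I^(r+k)`. When `r ≤ s = r + d`, this gives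
`x^d I^(r+1) = I^(s+1) = y I^s = x^d (y I^r)`, and cancelling the non-zerodivisor `x^d` shows that
`y I^r = I^(r+1)`; minimality of both reduction numbers then forces `r = s`. Finally
`x^r I^r = I^(2r) = y^r I^r`, and a principal ideal generated by a non-zerodivisor cancels from
such an identity, which identifies the colon ideals `x^r R : I^r` and `y^r R : I^r`.
-/

namespace Ideal

variable {R : Type*} [CommRing R]

theorem span_singleton_mul_right_mono_of_mem_nonZeroDivisors {x : R} (hx : x ∈ nonZeroDivisors R)
    {I J : Ideal R} : span {x} * I ≤ span {x} * J ↔ I ≤ J := by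
  simp_rw [span_singleton_mul_le_span_singleton_mul, mul_cancel_left_mem_nonZeroDivisors hx,
    exists_eq_right', SetLike.le_def]

theorem span_singleton_mul_pow_add_eq {I : Ideal R} {x : R} {r : ℕ}
    (hr : span {x} * I ^ r = I ^ (r + 1)) (k : ℕ) :
    span {x} * I ^ (r + k) = I ^ (r + k + 1) := by
  induction k with
  | zero => exact hr
  | succ k ih =>
    calc span {x} * I ^ (r + (k + 1)) = I * (span {x} * I ^ (r + k)) := by ring
      _ = I ^ (r + (k + 1) + 1) := by rw [ih]; ring

theorem span_singleton_pow_mul_pow_eq {I : Ideal R} {x : R} {r : ℕ}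
    (hr : span {x} * I ^ r = I ^ (r + 1)) (k : ℕ) :
    span {x} ^ k * I ^ r = I ^ (r + k) := by
  induction k with
  | zero => simp
  | succ k ih =>
    calc span {x} ^ (k + 1) * I ^ r = span {x} * (span {x} ^ k * I ^ r) := by ring
      _ = I ^ (r + (k + 1)) := by rw [ih, span_singleton_mul_pow_add_eq hr k]; ring

theorem span_singleton_mul_pow_eq_of_le {I : Ideal R} {x y : R} (hx : x ∈ nonZeroDivisors R)
    (hyI : span {y} ≤ I) {r s : ℕ} (hrs : r ≤ s)
    (hr : span {x} * I ^ r = I ^ (r + 1)) (hs : span {y} * I ^ s = I ^ (s + 1)) :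
    span {y} * I ^ r = I ^ (r + 1) := by
  obtain ⟨d, rfl⟩ := Nat.exists_eq_add_of_le hrs
  refine le_antisymm ?_ ?_
  · calc span {y} * I ^ r ≤ I * I ^ r := mul_le_mul_left hyI _
      _ = I ^ (r + 1) := by ring
  · rw [← span_singleton_mul_right_mono_of_mem_nonZeroDivisors (pow_mem hx d),
      ← span_singleton_pow]
    refine le_of_eq ?_
    calc span {x} ^ d * I ^ (r + 1) = I * (span {x} ^ d * I ^ r) := by ring
      _ = span {y} * I ^ (r + d) := by rw [span_singleton_pow_mul_pow_eq hr, hs]; ring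
      _ = span {x} ^ d * (span {y} * I ^ r) := by rw [← span_singleton_pow_mul_pow_eq hr]; ring

theorem colon_span_singleton_le_of_mul_eq {L : Ideal R} {a b : R} (ha : a ∈ nonZeroDivisors R)
    (hab : span {a} * L = span {b} * L) :
    (span {a}).colon (L : Set R) ≤ (span {b}).colon (L : Set R) := by
  intro z hz
  rw [Submodule.mem_colon_iff_le, ← Submodule.ideal_span_singleton_smul, smul_eq_mul] at hz ⊢
  rw [← span_singleton_mul_right_mono_of_mem_nonZeroDivisors ha]
  calc span {a} * (span {z} * L) = span {b} * (span {z} * L) := by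
        rw [mul_left_comm, hab, mul_left_comm]
    _ ≤ span {b} * span {a} := mul_le_mul_right hz _
    _ = span {a} * span {b} := mul_comm _ _

end Ideal

open Ideal in
/-- **Remark 4.6(1)**: Let `R` be a commutative ring, `I` an ideal, and `x, y`
non-zerodivisors with `xR ⊆ I` and `yR ⊆ I`.  If `r` is least with `x I^r = I^(r+1)` and `s`
is least with `y I^s = I^(s+1)`, then `r = s` and `(x^r R : I^r) = (y^s R : I^s)`: both the
reduction number and the ideal `J^r : I^r` are independent of the principal reduction `J`. -/
theorem reduction_number_and_colon_independent
    {R : Type*} [CommRing R] (I : Ideal R) (x y : R)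
    (hx : x ∈ nonZeroDivisors R) (hy : y ∈ nonZeroDivisors R)
    (hxI : Ideal.span {x} ≤ I) (hyI : Ideal.span {y} ≤ I)
    (r s : ℕ)
    (hr : Ideal.span {x} * I ^ r = I ^ (r + 1))
    (hrmin : ∀ t : ℕ, t < r → Ideal.span {x} * I ^ t ≠ I ^ (t + 1))
    (hs : Ideal.span {y} * I ^ s = I ^ (s + 1))
    (hsmin : ∀ t : ℕ, t < s → Ideal.span {y} * I ^ t ≠ I ^ (t + 1)) :
    r = s ∧
      Submodule.colon (Ideal.span {x} ^ r) ((I ^ r : Ideal R) : Set R) =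
        Submodule.colon (Ideal.span {y} ^ s) ((I ^ s : Ideal R) : Set R) := by
  obtain rfl : r = s := le_antisymm
    (not_lt.mp fun h => hrmin s h (span_singleton_mul_pow_eq_of_le hy hxI h.le hs hr))
    (not_lt.mp fun h => hsmin r h (span_singleton_mul_pow_eq_of_le hx hyI h.le hr hs))
  have hxy : span {x ^ r} * I ^ r = span {y ^ r} * I ^ r := by
    rw [← span_singleton_pow, ← span_singleton_pow, span_singleton_pow_mul_pow_eq hr,
      span_singleton_pow_mul_pow_eq hs]
  rw [span_singleton_pow, span_singleton_pow]
  exact ⟨rfl, le_antisymm (colon_span_singleton_le_of_mul_eq (pow_mem hx r) hxy)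
    (colon_span_singleton_le_of_mul_eq (pow_mem hy r) hxy.symm)⟩
end

section
/- Let R be a commutative ring, let x ∈ R be a non-zerodivisor, let J = xR, and let I be an ideal with J ⊆ I. Let r ≥ 1 be an integer with I^{r+1} = JI^r and I^r ≠ JI^{r-1}. If J^r : I^r = I^r, then I^r is not contained in J; consequently the index of nilpotency s_J(I) = min{ i : I^{i+1} ⊆ J } equals r. -/
/-!
Suppose `I ^ r ≤ J = (x)` and write `y ∈ I ^ r` as `y = x * a`. For `z ∈ I ^ r` the
reduction gives `x * (a * z) = y * z ∈ I ^ (r + r) = J ^ r * I ^ r ≤ J ^ (r + 1) = x * J ^ r`,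
and cancelling the non-zerodivisor `x` puts `a` in `J ^ r : I ^ r = I ^ r`. Hence
`I ^ r ≤ J * I ^ r ≤ J * I ^ (r - 1)`, contradicting the minimality of `r`. Since
`I ^ (r + 1) = J * I ^ r ≤ J`, the index of nilpotency is then exactly `r`.
-/

theorem pow_add_eq_pow_mul_of_pow_succ_eq {M : Type*} [CommMonoid M] {a b : M} {r : ℕ}
    (h : a ^ (r + 1) = b * a ^ r) (k : ℕ) : a ^ (r + k) = b ^ k * a ^ r := by
  induction k with
  | zero => simp
  | succ k ih =>
    rw [← add_assoc, pow_succ, ih, mul_assoc, ← pow_succ, h, ← mul_assoc, ← pow_succ]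

namespace Ideal

variable {R : Type*} [CommRing R]

theorem mem_of_mul_mem_span_singleton_mul {x a : R} {L : Ideal R} (hx : x ∈ nonZeroDivisors R)
    (h : x * a ∈ span {x} * L) : a ∈ L := by
  obtain ⟨b, hb, hba⟩ := mem_span_singleton_mul.mp h
  rw [mul_cancel_left_mem_nonZeroDivisors hx] at hba
  exact hba ▸ hb

theorem le_span_singleton_mul_colon {x : R} {N : Ideal R} {n : ℕ} (hx : x ∈ nonZeroDivisors R)
    (hN : N ≤ span {x}) (hsq : N * N ≤ span {x} ^ n * N) :
    N ≤ span {x} * Submodule.colon (span {x} ^ n) (N : Set R) := by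
  intro y hy
  obtain ⟨a, rfl⟩ := mem_span_singleton'.mp (hN hy)
  suffices ha : a ∈ Submodule.colon (span {x} ^ n) (N : Set R) by
    simpa only [mul_comm a] using mul_mem_mul (mem_span_singleton_self x) ha
  refine Submodule.mem_colon.mpr fun z hz => mem_of_mul_mem_span_singleton_mul hx ?_
  have hxaz : a * x * z ∈ span {x} ^ n * span {x} := mul_mono_right hN (hsq (mul_mem_mul hy hz))
  rwa [smul_eq_mul, mul_left_comm x a z, ← mul_assoc, mul_comm (span {x})]

theorem mul_pow_pred_le_pow {I J : Ideal R} (hJI : J ≤ I) (r : ℕ) :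
    J * I ^ (r - 1) ≤ I ^ r := by
  cases r with
  | zero => simp
  | succ r => simpa only [Nat.add_sub_cancel, pow_succ'] using mul_mono_left hJI

theorem sInf_setOf_pow_succ_le_eq {I J : Ideal R} {r : ℕ} (hsucc : I ^ (r + 1) ≤ J)
    (hr : ¬ I ^ r ≤ J) : sInf {i : ℕ | I ^ (i + 1) ≤ J} = r := by
  refine IsLeast.csInf_eq ⟨hsucc, fun i hi => ?_⟩
  by_contra! hlt
  exact hr ((pow_le_pow_right hlt).trans hi)

end Ideal

theorem not_pow_le_and_index_of_nilpotency_eq_general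
    {R : Type*} [CommRing R] (x : R) (hx : x ∈ nonZeroDivisors R)
    (J : Ideal R) (hJ : J = Ideal.span {x}) (I : Ideal R) (hJI : J ≤ I)
    (r : ℕ) (hred : I ^ (r + 1) = J * I ^ r) (hmin : I ^ r ≠ J * I ^ (r - 1))
    (hcol : Submodule.colon (J ^ r) ((I ^ r : Ideal R) : Set R) = I ^ r) :
    ¬ I ^ r ≤ J ∧ sInf {i : ℕ | I ^ (i + 1) ≤ J} = r := by
  have hnot : ¬ I ^ r ≤ J := by
    intro hle
    have hsq : I ^ r * I ^ r ≤ J ^ r * I ^ r := by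
      rw [← pow_add, pow_add_eq_pow_mul_of_pow_succ_eq hred]
    refine hmin (le_antisymm ?_ (Ideal.mul_pow_pred_le_pow hJI r))
    calc I ^ r ≤ J * Submodule.colon (J ^ r) ((I ^ r : Ideal R) : Set R) := by
          subst hJ; exact Ideal.le_span_singleton_mul_colon hx hle hsq
      _ = J * I ^ r := by rw [hcol]
      _ ≤ J * I ^ (r - 1) := Ideal.mul_mono_right (Ideal.pow_le_pow_right (Nat.sub_le r 1))
  exact ⟨hnot, Ideal.sInf_setOf_pow_succ_le_eq (hred ▸ Ideal.mul_le_left) hnot⟩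

/-- **Remark 4.6(3)**: Let `R` be a commutative ring, `x` a non-zerodivisor, `J = xR ⊆ I`, and
`r ≥ 1` with `I^(r+1) = J I^r` and `I^r ≠ J I^(r-1)`.  If `(J^r : I^r) = I^r`, then
`I^r ⊄ J`; consequently the index of nilpotency `s_J(I) = min{ i : I^(i+1) ⊆ J }`
equals `r`. -/
theorem not_pow_le_and_index_of_nilpotency_eq
    {R : Type*} [CommRing R] (x : R) (hx : x ∈ nonZeroDivisors R)
    (J : Ideal R) (hJ : J = Ideal.span {x}) (I : Ideal R) (hJI : J ≤ I)
    (r : ℕ) (hr : 1 ≤ r) (hred : I ^ (r + 1) = J * I ^ r) (hmin : I ^ r ≠ J * I ^ (r - 1))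
    (hcol : Submodule.colon (J ^ r) ((I ^ r : Ideal R) : Set R) = I ^ r) :
    ¬ I ^ r ≤ J ∧ sInf {i : ℕ | I ^ (i + 1) ≤ J} = r :=
  not_pow_le_and_index_of_nilpotency_eq_general x hx J hJ I hJI r hred hmin hcol
end

section
/- Let R be a commutative ring and let J ⊆ I be ideals of R. In the Laurent polynomial ring R[T, T^{-1}], let A be the R-subalgebra generated by T^{-1} together with all elements aT with a ∈ J, and let B be the R-subalgebra generated by T^{-1} together with all elements aT with a ∈ I (so A and B are the extended Rees algebras of J and I). Then for an element f of R[T, T^{-1}], one has f·b ∈ A for every b ∈ B if and only if for every integer i and every integer j ≥ 0 the coefficient of T^i in f lies in the colon ideal J^{max(i+j,0)} : I^j. -/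
/-!
The algebra generated by `T⁻¹` and `I T` consists exactly of the `g` whose coefficient of `T^i`
lies in `I^i` (read as `R` for `i ≤ 0`). Testing `f` against the homogeneous elements `a T^j`,
`a ∈ I^j`, gives the colon conditions. Conversely, each coefficient of `f b` is a sum of products
`f_i b_k`, and the colon condition with `j = max(k, 0)` puts `f_i b_k` in
`J^max(i+j, 0) ⊆ J^max(i+k, 0)`.
-/

open LaurentPolynomial

namespace LaurentPolynomial

theorem coeff_mul_mem_of_forall {R : Type*} [Semiring R] {S : Type*} [SetLike S R] [AddSubmonoidClass S R] {M : S}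
    {f g : R[T;T⁻¹]} {m : ℤ} (h : ∀ i k, i + k = m → f.coeff i * g.coeff k ∈ M) :
    (f * g).coeff m ∈ M := by
  classical
  rw [AddMonoidAlgebra.coeff_mul]
  refine sum_mem fun i _ => sum_mem fun k _ => ?_
  dsimp only
  split_ifs with hik
  · exact h i k hik
  · exact zero_mem M

end LaurentPolynomial

section ExtendedRees

variable {R : Type*} [CommRing R]

/-- `R[I T, T⁻¹]`; `Int.toNat` truncates negative degrees, whose pieces are `I ^ 0 = R`. -/
def extendedReesAlgebra (I : Ideal R) : Subalgebra R R[T;T⁻¹] where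
  carrier := {g | ∀ i : ℤ, g.coeff i ∈ I ^ i.toNat}
  add_mem' {x y} hx hy i := by
    rw [AddMonoidAlgebra.coeff_add, Finsupp.add_apply]
    exact add_mem (hx i) (hy i)
  mul_mem' {x y} hx hy m := coeff_mul_mem_of_forall fun i k hik =>
    Ideal.pow_le_pow_right (by omega : m.toNat ≤ i.toNat + k.toNat)
      (by rw [pow_add]; exact Ideal.mul_mem_mul (hx i) (hy k))
  algebraMap_mem' r i := by
    rw [← C_eq_algebraMap, C_apply]
    split_ifs with h
    · simp [h]
    · exact zero_mem _

theorem single_mem_extendedReesAlgebra {I : Ideal R} {n : ℤ} {a : R} (ha : a ∈ I ^ n.toNat) :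
    (AddMonoidAlgebra.single n a : R[T;T⁻¹]) ∈ extendedReesAlgebra I := by
  classical
  intro i
  rw [AddMonoidAlgebra.coeff_single, Finsupp.single_apply]
  split_ifs with h
  · exact h ▸ ha
  · exact zero_mem _

theorem adjoin_le_extendedReesAlgebra (I : Ideal R) :
    Algebra.adjoin R ({T (-1)} ∪ (fun a : R => C a * T 1) '' (I : Set R) : Set R[T;T⁻¹]) ≤
      extendedReesAlgebra I := by
  refine Algebra.adjoin_le ?_
  rintro _ (rfl | ⟨a, ha, rfl⟩)
  · rw [← one_mul (T (-1)), ← map_one C, ← single_eq_C_mul_T]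
    exact single_mem_extendedReesAlgebra (by simp)
  · show C a * T 1 ∈ _
    rw [← single_eq_C_mul_T]
    exact single_mem_extendedReesAlgebra (by simpa using ha)

theorem C_mul_T_natCast_mem_adjoin (I : Ideal R) (n : ℕ) {a : R} (ha : a ∈ I ^ n) :
    C a * T (n : ℤ) ∈
      Algebra.adjoin R ({T (-1)} ∪ (fun a : R => C a * T 1) '' (I : Set R) : Set R[T;T⁻¹]) := by
  induction n generalizing a with
  | zero =>
    rw [Nat.cast_zero, T_zero, mul_one, C_eq_algebraMap]
    exact Subalgebra.algebraMap_mem _ a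
  | succ n ih =>
    rw [pow_succ] at ha
    refine Submodule.mul_induction_on ha (fun b hb c hc => ?_) (fun x y hx hy => ?_)
    · have hsplit : (C (b * c) * T ((n + 1 : ℕ) : ℤ) : R[T;T⁻¹]) =
          (C b * T (n : ℤ)) * (C c * T 1) := by
        push_cast
        rw [map_mul, T_add]
        ring
      rw [hsplit]
      exact mul_mem (ih hb) (Algebra.subset_adjoin (Or.inr ⟨c, hc, rfl⟩))
    · rw [map_add, add_mul]
      exact add_mem hx hy

theorem single_mem_adjoin {I : Ideal R} {n : ℤ} {a : R} (ha : a ∈ I ^ n.toNat) :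
    (AddMonoidAlgebra.single n a : R[T;T⁻¹]) ∈
      Algebra.adjoin R ({T (-1)} ∪ (fun a : R => C a * T 1) '' (I : Set R) : Set R[T;T⁻¹]) := by
  rcases le_or_gt 0 n with hn | hn
  · lift n to ℕ using hn
    rw [single_eq_C_mul_T]
    exact C_mul_T_natCast_mem_adjoin I n (by simpa using ha)
  · have hneg : (AddMonoidAlgebra.single n a : R[T;T⁻¹]) = C a * T (-1) ^ (-n).toNat := by
      rw [T_pow, single_eq_C_mul_T]
      congr 2
      omega
    have hT : (T (-1) : R[T;T⁻¹]) ∈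
        Algebra.adjoin R ({T (-1)} ∪ (fun a : R => C a * T 1) '' (I : Set R)) :=
      Algebra.subset_adjoin (Set.mem_union_left _ rfl)
    rw [hneg, C_eq_algebraMap]
    exact mul_mem (Subalgebra.algebraMap_mem _ a) (pow_mem hT _)

theorem extendedReesAlgebra_le_adjoin (I : Ideal R) :
    extendedReesAlgebra I ≤
      Algebra.adjoin R ({T (-1)} ∪ (fun a : R => C a * T 1) '' (I : Set R) : Set R[T;T⁻¹]) := by
  intro g hg
  rw [← AddMonoidAlgebra.sum_coeff_single g, Finsupp.sum]
  exact Subalgebra.sum_mem _ fun n _ => single_mem_adjoin (hg n)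

theorem adjoin_eq_extendedReesAlgebra (I : Ideal R) :
    Algebra.adjoin R ({T (-1)} ∪ (fun a : R => C a * T 1) '' (I : Set R) : Set R[T;T⁻¹]) =
      extendedReesAlgebra I :=
  le_antisymm (adjoin_le_extendedReesAlgebra I) (extendedReesAlgebra_le_adjoin I)

variable {I J : Ideal R} {f : R[T;T⁻¹]}

theorem coeff_mem_colon_of_mul_mem_extendedReesAlgebra
    (hf : ∀ b ∈ extendedReesAlgebra I, f * b ∈ extendedReesAlgebra J) (i : ℤ) (j : ℕ) :
    f.coeff i ∈ Submodule.colon (J ^ (i + (j : ℤ)).toNat) ((I ^ j : Ideal R) : Set R) := by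
  rw [Submodule.mem_colon]
  intro a ha
  have hprod := hf _ (single_mem_extendedReesAlgebra (n := j) (by simpa using ha)) (i + j)
  rwa [AddMonoidAlgebra.coeff_mul_single_apply, add_neg_cancel_right] at hprod

theorem mul_mem_extendedReesAlgebra_of_coeff_mem_colon
    (hf : ∀ (i : ℤ) (j : ℕ),
      f.coeff i ∈ Submodule.colon (J ^ (i + (j : ℤ)).toNat) ((I ^ j : Ideal R) : Set R))
    {b : R[T;T⁻¹]} (hb : b ∈ extendedReesAlgebra I) : f * b ∈ extendedReesAlgebra J :=
  fun m => coeff_mul_mem_of_forall fun i k hik =>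
    Ideal.pow_le_pow_right (by omega : m.toNat ≤ (i + (k.toNat : ℤ)).toNat)
      (Submodule.mem_colon.mp (hf i k.toNat) (b.coeff k) (hb k))

end ExtendedRees

theorem mem_conductor_iff_coeff_mem_colon_general
    {R : Type*} [CommRing R] (J I : Ideal R) (f : R[T;T⁻¹]) :
    (∀ b ∈ Algebra.adjoin R
        ({T (-1)} ∪ (fun a : R => C a * T 1) '' (I : Set R) : Set R[T;T⁻¹]),
      f * b ∈ Algebra.adjoin R
        ({T (-1)} ∪ (fun a : R => C a * T 1) '' (J : Set R) : Set R[T;T⁻¹])) ↔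
    (∀ (i : ℤ) (j : ℕ),
      f.coeff i ∈ Submodule.colon (J ^ (i + (j : ℤ)).toNat) ((I ^ j : Ideal R) : Set R)) := by
  rw [adjoin_eq_extendedReesAlgebra I, adjoin_eq_extendedReesAlgebra J]
  exact ⟨coeff_mem_colon_of_mul_mem_extendedReesAlgebra,
    fun hf _ hb => mul_mem_extendedReesAlgebra_of_coeff_mem_colon hf hb⟩

/-- **The conductor computation in the proof of Theorem 4.1**: Let `R` be a commutative ring
and `J ⊆ I` ideals.  In the Laurent polynomial ring `R[T,T⁻¹]`, let `A` (resp. `B`) be the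
`R`-subalgebra generated by `T⁻¹` together with all `aT` with `a ∈ J` (resp. `a ∈ I`) — the
extended Rees algebras of `J` and `I`.  Then `f · b ∈ A` for every `b ∈ B` iff for every
`i : ℤ` and every `j ≥ 0` the coefficient of `T^i` in `f` lies in `J^(max(i+j,0)) : I^j`. -/
theorem mem_conductor_iff_coeff_mem_colon
    {R : Type*} [CommRing R] (J I : Ideal R) (hJI : J ≤ I) (f : R[T;T⁻¹]) :
    (∀ b ∈ Algebra.adjoin R
        ({T (-1)} ∪ (fun a : R => C a * T 1) '' (I : Set R) : Set R[T;T⁻¹]),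
      f * b ∈ Algebra.adjoin R
        ({T (-1)} ∪ (fun a : R => C a * T 1) '' (J : Set R) : Set R[T;T⁻¹])) ↔
    (∀ (i : ℤ) (j : ℕ),
      f.coeff i ∈ Submodule.colon (J ^ (i + (j : ℤ)).toNat) ((I ^ j : Ideal R) : Set R)) :=
  mem_conductor_iff_coeff_mem_colon_general J I f
end
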